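/- Let r be a Datalog rule whose body atoms are listed in a fixed order B_0, …, B_n, and let I and Δ be datasets with Δ ⊆ I. Then r[I ∸ Δ] = ⋃_{i=0}^{n} { h(rσ) | B_jσ ∈ I \ Δ for all j < i, B_iσ ∈ Δ, and B_jσ ∈ I for all j > i }. Moreover the disjuncts are non-repetitive: for i ≠ i′ there is no substitution σ defined exactly on var(b(r)) that satisfies both the i-th and the i′-th matching condition. -/
import Mathlib


namespace Datalog

/-- An atom `P(t₁,…,tₖ)`: a predicate symbol applied to a list of terms, where
`Sum.inl v` denotes the variable `v` and `Sum.inr c` denotes the constant `c`. -/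
structure Atom where
  pred : ℕ
  args : List (ℕ ⊕ ℕ)
deriving DecidableEq

/-- A fact: a variable-free atom, i.e. a predicate applied to constants only. -/
structure Fact where
  pred : ℕ
  args : List ℕ
deriving DecidableEq

/-- Applying a substitution `σ` (a map from variables to constants) to an atom. -/
def Atom.subst (A : Atom) (σ : ℕ → ℕ) : Fact :=
  ⟨A.pred, A.args.map (Sum.elim σ id)⟩

/-- The set of variables occurring in an atom. -/
def Atom.vars (A : Atom) : Set ℕ := { v | Sum.inl v ∈ A.args }

/-- A Datalog rule: a head atom and a finite set of body atoms, which is safe: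
every variable of the head occurs in some body atom. -/
structure Rule where
  head : Atom
  body : Finset Atom
  safe : ∀ v ∈ head.vars, ∃ B ∈ body, v ∈ B.vars

/-- `r[I] = { h(rσ) | b(rσ) ⊆ I }`. -/
def Rule.eval (r : Rule) (I : Set Fact) : Set Fact :=
  { f | ∃ σ : ℕ → ℕ, (∀ B ∈ r.body, B.subst σ ∈ I) ∧ f = r.head.subst σ }

/-- `r[I ∸ Δ] = { h(rσ) | b(rσ) ⊆ I and b(rσ) ∩ Δ ≠ ∅ }`. -/
def Rule.evalDelta (r : Rule) (I Δ : Set Fact) : Set Fact :=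
  { f | ∃ σ : ℕ → ℕ, (∀ B ∈ r.body, B.subst σ ∈ I) ∧
        (∃ B ∈ r.body, B.subst σ ∈ Δ) ∧ f = r.head.subst σ }

/-- `Π[I] = ⋃_{r ∈ Π} r[I]`. -/
def progEval (P : Set Rule) (I : Set Fact) : Set Fact := ⋃ r ∈ P, r.eval I

/-- `Π[I ∸ Δ] = ⋃_{r ∈ Π} r[I ∸ Δ]`. -/
def progEvalDelta (P : Set Rule) (I Δ : Set Fact) : Set Fact := ⋃ r ∈ P, r.evalDelta I Δ

/-- `I_0 = E`, `I_{i+1} = I_i ∪ Π[I_i]`. -/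
def matSeq (P : Set Rule) (E : Set Fact) : ℕ → Set Fact
  | 0 => E
  | n + 1 => matSeq P E n ∪ progEval P (matSeq P E n)

/-- The materialisation `mat(Π, E) = ⋃_{i ≥ 0} I_i`. -/
def mat (P : Set Rule) (E : Set Fact) : Set Fact := ⋃ n, matSeq P E n

/-- The matching condition of the `i`-th evaluation of the body
`B_0^{I \ Δ} ∧ ⋯ ∧ B_{i-1}^{I \ Δ} ∧ B_i^{Δ} ∧ B_{i+1}^{I} ∧ ⋯ ∧ B_n^{I}`. -/
def matchCond (L : List Atom) (I Δ : Set Fact) (i : ℕ) (σ : ℕ → ℕ) : Prop :=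
  (∀ j (hj : j < L.length), j < i → (L[j]'hj).subst σ ∈ I \ Δ) ∧
  (∀ hi : i < L.length, (L[i]'hi).subst σ ∈ Δ) ∧
  (∀ j (hj : j < L.length), i < j → (L[j]'hj).subst σ ∈ I)

/-- `r[I ∸ Δ]` is the union over `i` of the facts obtained by the
`i`-th evaluation of the body, and the disjuncts are non-repetitive. -/
theorem seminaive_body_matching (r : Rule) (hne : r.body.Nonempty)
    (L : List Atom) (hnd : L.Nodup) (hL : L.toFinset = r.body)
    (I Δ : Set Fact) (hΔ : Δ ⊆ I) :
    r.evalDelta I Δ =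
      (⋃ i < L.length, { f | ∃ σ : ℕ → ℕ, matchCond L I Δ i σ ∧ f = r.head.subst σ }) ∧
    ∀ i i', i < L.length → i' < L.length → i ≠ i' →
      ¬ ∃ σ : ℕ → ℕ, matchCond L I Δ i σ ∧ matchCond L I Δ i' σ := by
  constructor
  · ext f
    simp only [Set.mem_iUnion, Set.mem_setOf_eq]
    constructor
    · rintro ⟨σ, hI, ⟨B, hB, hBΔ⟩, hf⟩
      have hmem : ∀ j (hj : j < L.length), (L[j]'hj).subst σ ∈ I := by
        intro j hj
        exact hI _ (by rw [← hL]; exact List.mem_toFinset.2 (List.getElem_mem hj))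
      rw [← hL] at hB
      obtain ⟨i0, hi0, hBi⟩ := List.mem_iff_getElem.1 (List.mem_toFinset.1 hB)
      have hex : ∃ i, ∃ hi : i < L.length, (L[i]'hi).subst σ ∈ Δ := ⟨i0, hi0, hBi ▸ hBΔ⟩
      classical
      obtain ⟨hi, hiΔ⟩ := Nat.find_spec hex
      refine ⟨Nat.find hex, hi, σ, ⟨?_, fun _ => hiΔ, fun j hj _ => hmem j hj⟩, hf⟩
      intro j hj hji
      refine ⟨hmem j hj, fun hc => ?_⟩
      exact absurd (Nat.find_min hex (m := j) hji ⟨hj, hc⟩) (by simp)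
    · rintro ⟨i, hi, σ, ⟨h1, h2, h3⟩, hf⟩
      refine ⟨σ, ?_, ⟨L[i], by rw [← hL]; exact List.mem_toFinset.2 (List.getElem_mem hi), h2 hi⟩, hf⟩
      intro B hB
      rw [← hL] at hB
      obtain ⟨j, hj, rfl⟩ := List.mem_iff_getElem.1 (List.mem_toFinset.1 hB)
      rcases lt_trichotomy j i with h | h | h
      · exact (h1 j hj h).1
      · subst h; exact hΔ (h2 hj)
      · exact h3 j hj h
  · intro i i' hi hi' hne'
    rintro ⟨σ, ⟨c1, c2, c3⟩, ⟨d1, d2, d3⟩⟩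
    rcases hne'.lt_or_gt with h | h
    · exact (d1 i hi h).2 (c2 hi)
    · exact (c1 i' hi' h).2 (d2 hi')


end Datalog
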